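/- Let p ≥ 1, u ≥ 1 be real numbers, v > 1 a real number, δ ∈ ℂ \ {0} and 0 ≤ η ≤ 1. Define ℋ(p,u,v)(z) = ∫₀^z (ℱ(p,u,v)(t)/t) dt = z + Σ_{s=2}^∞ (p^{s−1}/(s E_{u,v}(p) Γ(u(s−1)+v))) z^s on the open unit disc. If (1/(u E_{u,v}(p))) [ ((1−v)η + u)(E_{u,v}(p) − 1/Γ(v)) + η(E_{u,v−1}(p) − 1/Γ(v−1)) ] ≤ |δ|, then ℋ(p,u,v) belongs to ℛ(η,δ). -/

import Mathlib

open Metric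

/-- The Mittag-Leffler function `E_{u,v}(p) = ∑_{n=0}^∞ p^n / Γ(un+v)`. -/
noncomputable def mlE (u v p : ℝ) : ℝ := ∑' n : ℕ, p ^ n / Real.Gamma (u * n + v)

/-- The integral operator
`ℋ(p,u,v)(z) = ∫₀^z ℱ(p,u,v)(t)/t dt = z + ∑_{s=2}^∞ (p^{s-1}/(s E_{u,v}(p) Γ(u(s-1)+v))) z^s`. -/
noncomputable def mlH (p u v : ℝ) (z : ℂ) : ℂ :=
  z + ∑' s : ℕ,
    ((p ^ (s + 1) / ((s + 2) * mlE u v p * Real.Gamma (u * (s + 1) + v)) : ℝ) : ℂ) * z ^ (s + 2)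

noncomputable def mlw (p u v : ℝ) (n : ℕ) : ℝ := p ^ (n + 1) / Real.Gamma (u * (n + 1) + v)

noncomputable def mlc (p u v : ℝ) (n : ℕ) : ℝ :=
  p ^ (n + 1) / (((n:ℝ) + 2) * mlE u v p * Real.Gamma (u * ((n:ℝ) + 1) + v))

noncomputable def mlG1 (p u v : ℝ) (z : ℂ) : ℂ :=
  ∑' n : ℕ, ((((n:ℝ) + 2) * mlc p u v n : ℝ) : ℂ) * z ^ (n + 1)

noncomputable def mlG2 (p u v : ℝ) (z : ℂ) : ℂ :=
  ∑' n : ℕ, ((((n:ℝ) + 2) * ((n:ℝ) + 1) * mlc p u v n : ℝ) : ℂ) * z ^ n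

lemma mlH_eq (p u v : ℝ) :
    mlH p u v = fun z => z + ∑' n : ℕ, ((mlc p u v n : ℝ) : ℂ) * z ^ (n + 2) := rfl

section real
variable {p u v : ℝ} (hp : 1 ≤ p) (hu : 1 ≤ u) (hv : 1 < v)
include hp hu hv

lemma mlw_nonneg (n : ℕ) : 0 ≤ mlw p u v n := by
  have h1 : (0:ℝ) < u * (n + 1) + v := by positivity
  have := Real.Gamma_pos_of_pos h1
  unfold mlw
  positivity

lemma gamma_ge (n : ℕ) : ((n+1).factorial : ℝ) ≤ Real.Gamma (u * (n + 1) + v) := by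
  have hn : (0:ℝ) ≤ n := n.cast_nonneg
  have h1 : ((n:ℝ) + 1) + 1 ≤ u * (n + 1) + v := by nlinarith
  have h2 : Real.Gamma ((n:ℝ) + 1 + 1) ≤ Real.Gamma (u * (n + 1) + v) :=
    Real.Gamma_strictMonoOn_Ici.monotoneOn (by simp [Set.mem_Ici]; nlinarith)
      (by simp [Set.mem_Ici]; nlinarith) h1
  calc ((n+1).factorial : ℝ) = Real.Gamma ((n:ℝ) + 1 + 1) := by
        rw [show ((n:ℝ) + 1 + 1) = ((n+1 : ℕ) : ℝ) + 1 by push_cast; ring,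
          Real.Gamma_nat_eq_factorial]
    _ ≤ _ := h2

lemma mlw_le (n : ℕ) : ((n:ℝ)+1)^2 * mlw p u v n ≤ p * ((2*p)^n / n.factorial) := by
  have hp0 : (0:ℝ) < p := lt_of_lt_of_le one_pos hp
  have hfac : (0:ℝ) < (n+1).factorial := by positivity
  have hnf : (0:ℝ) < n.factorial := by positivity
  have h1 : mlw p u v n ≤ p ^ (n+1) / (n+1).factorial := by
    unfold mlw
    exact div_le_div_of_nonneg_left (by positivity) hfac (gamma_ge hp hu hv n)
  have hn2 : ((n:ℝ)+1) ≤ 2^n := by exact_mod_cast Nat.lt_two_pow_self (n := n)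
  have key : ((n:ℝ)+1)^2 * (p ^ (n+1) / (n+1).factorial)
      = ((n:ℝ)+1) * p^(n+1) / n.factorial := by
    rw [Nat.factorial_succ]
    push_cast
    field_simp
  calc ((n:ℝ)+1)^2 * mlw p u v n ≤ ((n:ℝ)+1)^2 * (p ^ (n+1) / (n+1).factorial) := by
        apply mul_le_mul_of_nonneg_left h1 (by positivity)
    _ = ((n:ℝ)+1) * p^(n+1) / n.factorial := key
    _ ≤ p * ((2*p)^n / n.factorial) := by
        rw [mul_pow, show p * (2^n * p^n / n.factorial) = (2:ℝ)^n * p^(n+1) / n.factorial by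
          rw [pow_succ]; ring]
        gcongr

lemma summable_sq_mlw : Summable (fun n : ℕ => ((n:ℝ)+1)^2 * mlw p u v n) := by
  apply Summable.of_nonneg_of_le
    (fun n => mul_nonneg (by positivity) (mlw_nonneg hp hu hv n))
    (mlw_le hp hu hv) ((Real.summable_pow_div_factorial (2*p)).mul_left p)

lemma summable_mlw : Summable (mlw p u v) := by
  apply Summable.of_nonneg_of_le (mlw_nonneg hp hu hv) (fun n => ?_) (summable_sq_mlw hp hu hv)
  have h := mlw_nonneg hp hu hv n
  have hn : (0:ℝ) ≤ n := n.cast_nonneg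
  nlinarith [mul_nonneg (mul_nonneg hn hn) h, mul_nonneg hn h]

lemma summable_mul_mlw : Summable (fun n : ℕ => ((n:ℝ)+1) * mlw p u v n) := by
  apply Summable.of_nonneg_of_le
    (fun n => mul_nonneg (by positivity) (mlw_nonneg hp hu hv n))
    (fun n => ?_) (summable_sq_mlw hp hu hv)
  have h := mlw_nonneg hp hu hv n
  have hn : (0:ℝ) ≤ n := n.cast_nonneg
  nlinarith [mul_nonneg (mul_nonneg hn hn) h, mul_nonneg hn h]

lemma summable_mlw' : Summable (mlw p u (v-1)) := by
  rw [← summable_nat_add_iff 1]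
  have hp0 : (0:ℝ) < p := lt_of_lt_of_le one_pos hp
  have hΓpos : ∀ n : ℕ, (0:ℝ) < Real.Gamma (u * (((n+1:ℕ):ℝ)+1) + (v-1)) := by
    intro n
    apply Real.Gamma_pos_of_pos
    have : (0:ℝ) ≤ n := n.cast_nonneg
    push_cast
    nlinarith
  have hΓge : ∀ n : ℕ, ((n+1).factorial : ℝ) ≤ Real.Gamma (u * (((n+1:ℕ):ℝ)+1) + (v-1)) := by
    intro n
    have hn : (0:ℝ) ≤ n := n.cast_nonneg
    have harg : ((n:ℝ) + 1) + 1 ≤ u * (((n+1:ℕ):ℝ)+1) + (v-1) := by push_cast; nlinarith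
    have h2 : Real.Gamma ((n:ℝ) + 1 + 1) ≤ Real.Gamma (u * (((n+1:ℕ):ℝ)+1) + (v-1)) :=
      Real.Gamma_strictMonoOn_Ici.monotoneOn (by simp [Set.mem_Ici]; nlinarith)
        (by simp [Set.mem_Ici]; push_cast; nlinarith) harg
    calc ((n+1).factorial : ℝ) = Real.Gamma ((n:ℝ) + 1 + 1) := by
          rw [show ((n:ℝ) + 1 + 1) = ((n+1 : ℕ) : ℝ) + 1 by push_cast; ring,
            Real.Gamma_nat_eq_factorial]
      _ ≤ _ := h2
  have h1 : ∀ n : ℕ, 0 ≤ mlw p u (v-1) (n+1) := by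
    intro n
    have := hΓpos n
    unfold mlw
    positivity
  have h2 : ∀ n : ℕ, mlw p u (v-1) (n+1) ≤ p^2 * (p^n / n.factorial) := by
    intro n
    have hfac1 : (0:ℝ) < (n+1).factorial := by positivity
    have hb : mlw p u (v-1) (n+1) ≤ p^(n+1+1) / (n+1).factorial := by
      unfold mlw
      exact div_le_div_of_nonneg_left (by positivity) hfac1 (hΓge n)
    refine hb.trans ?_
    rw [show p^(n+1+1) = p^2 * p^n by ring, mul_div_assoc]
    apply mul_le_mul_of_nonneg_left _ (by positivity)
    apply div_le_div_of_nonneg_left (by positivity) (by positivity)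
    exact_mod_cast Nat.factorial_le (Nat.le_succ n)
  exact Summable.of_nonneg_of_le h1 h2 ((Real.summable_pow_div_factorial p).mul_left (p^2))

omit hp hu hv in
lemma summable_E_series' {t : ℝ} (hs : Summable (mlw p u t)) :
    Summable (fun n : ℕ => p^n / Real.Gamma (u*n+t)) := by
  rw [← summable_nat_add_iff 1]
  apply hs.congr
  intro n
  unfold mlw
  push_cast
  ring_nf

omit hp hu hv in
lemma tsum_mlw_eq_gen {t : ℝ} (hs : Summable (fun n : ℕ => p^n / Real.Gamma (u*n+t))) :
    ∑' n, mlw p u t n = mlE u t p - 1/Real.Gamma t := by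
  have h := Summable.tsum_eq_zero_add hs
  simp only [pow_zero, Nat.cast_zero, mul_zero, zero_add] at h
  have h2 : (∑' n:ℕ, p^(n+1)/Real.Gamma (u*(((n+1):ℕ):ℝ)+t)) = ∑' n, mlw p u t n := by
    apply tsum_congr; intro n; unfold mlw; push_cast; ring_nf
  unfold mlE
  rw [h, h2]
  ring

lemma mlE_pos : 0 < mlE u v p := by
  have hΓ : ∀ n : ℕ, (0:ℝ) < Real.Gamma (u*n+v) := by
    intro n
    apply Real.Gamma_pos_of_pos
    have : (0:ℝ) ≤ n := n.cast_nonneg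
    nlinarith
  have hp0 : (0:ℝ) < p := lt_of_lt_of_le one_pos hp
  unfold mlE
  apply Summable.tsum_pos (summable_E_series' (summable_mlw hp hu hv))
    (fun n => by have := hΓ n; positivity) 0
  have := hΓ 0
  positivity

lemma mlw_key (n : ℕ) : ((n:ℝ)+1) * mlw p u v n
    = (mlw p u (v-1) n - (v-1) * mlw p u v n)/u := by
  have hn : (0:ℝ) ≤ n := n.cast_nonneg
  have hx0 : u * ((n:ℝ)+1) + (v-1) ≠ 0 := by nlinarith
  have hΓx : (0:ℝ) < Real.Gamma (u * ((n:ℝ)+1) + (v-1)) := by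
    apply Real.Gamma_pos_of_pos; nlinarith
  have h1 : Real.Gamma (u*((n:ℝ)+1)+v)
      = (u * ((n:ℝ)+1) + (v-1)) * Real.Gamma (u * ((n:ℝ)+1) + (v-1)) := by
    rw [show u*((n:ℝ)+1)+v = (u * ((n:ℝ)+1) + (v-1)) + 1 by ring]
    exact Real.Gamma_add_one hx0
  unfold mlw
  rw [h1]
  have hu0 : u ≠ 0 := by positivity
  have hx0' : ((n:ℝ)+1) * u + (v-1) ≠ 0 := by nlinarith
  have hΓx' : Real.Gamma (((n:ℝ)+1) * u + (v-1)) ≠ 0 := by rw [mul_comm]; exact hΓx.ne'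
  field_simp
  ring

variable {η : ℝ} (hη0 : 0 ≤ η) (hη1 : η ≤ 1)
include hη0 hη1

lemma summable_B : Summable (fun n : ℕ => (1+η*((n:ℝ)+1)) * mlw p u v n) := by
  have h1 : ∀ n : ℕ, 0 ≤ (1+η*((n:ℝ)+1)) * mlw p u v n := by
    intro n
    have hn : (0:ℝ) ≤ n := n.cast_nonneg
    apply mul_nonneg (by nlinarith) (mlw_nonneg hp hu hv n)
  have h2 : ∀ n : ℕ, (1+η*((n:ℝ)+1)) * mlw p u v n ≤ 2 * (((n:ℝ)+1)^2 * mlw p u v n) := by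
    intro n
    have hn : (0:ℝ) ≤ n := n.cast_nonneg
    have h := mlw_nonneg hp hu hv n
    nlinarith [mul_nonneg (mul_nonneg hn hn) h, mul_nonneg hn h]
  exact Summable.of_nonneg_of_le h1 h2 ((summable_sq_mlw hp hu hv).mul_left 2)

lemma tsum_B_eq : ∑' n : ℕ, (1+η*((n:ℝ)+1)) * mlw p u v n
    = (∑' n, mlw p u v n)
      + η * (((∑' n, mlw p u (v-1) n) - (v-1) * (∑' n, mlw p u v n))/u) := by
  have e1 : ∀ n : ℕ, (1+η*((n:ℝ)+1)) * mlw p u v n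
      = mlw p u v n + η * (((n:ℝ)+1) * mlw p u v n) := by intro n; ring
  rw [tsum_congr e1,
    Summable.tsum_add (summable_mlw hp hu hv) (((summable_mul_mlw hp hu hv)).mul_left η),
    tsum_mul_left, tsum_congr (mlw_key hp hu hv),
    tsum_div_const, Summable.tsum_sub (summable_mlw' hp hu hv) ((summable_mlw hp hu hv).mul_left (v-1)),
    tsum_mul_left]

lemma B_div_le {δ : ℂ}
    (hcond : 1 / (u * mlE u v p) *
        (((1 - v) * η + u) * (mlE u v p - 1 / Real.Gamma v) +
          η * (mlE u (v - 1) p - 1 / Real.Gamma (v - 1)))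
        ≤ ‖δ‖) :
    (∑' n : ℕ, (1+η*((n:ℝ)+1)) * mlw p u v n) / mlE u v p ≤ ‖δ‖ := by
  have T1 : ∑' n, mlw p u v n = mlE u v p - 1/Real.Gamma v :=
    tsum_mlw_eq_gen (summable_E_series' (summable_mlw hp hu hv))
  have T2 : ∑' n, mlw p u (v-1) n = mlE u (v-1) p - 1/Real.Gamma (v-1) :=
    tsum_mlw_eq_gen (summable_E_series' (summable_mlw' hp hu hv))
  rw [← T1, ← T2] at hcond
  rw [tsum_B_eq hp hu hv hη0 hη1]
  refine le_trans (le_of_eq ?_) hcond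
  have hu0 : u ≠ 0 := by positivity
  have hE0 : mlE u v p ≠ 0 := ne_of_gt (mlE_pos hp hu hv)
  field_simp
  ring

end real

section cx
variable {p u v : ℝ} (hp : 1 ≤ p) (hu : 1 ≤ u) (hv : 1 < v)
include hp hu hv

lemma gammaE_pos (n : ℕ) : 0 < Real.Gamma (u * ((n:ℝ) + 1) + v) := by
  apply Real.Gamma_pos_of_pos
  have : (0:ℝ) ≤ n := n.cast_nonneg
  nlinarith

lemma mlc_nonneg (n : ℕ) : 0 ≤ mlc p u v n := by
  have h1 := gammaE_pos hp hu hv n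
  have h2 := mlE_pos hp hu hv
  have hp0 : (0:ℝ) < p := lt_of_lt_of_le one_pos hp
  unfold mlc
  positivity

lemma mlc_eq (n : ℕ) : ((n:ℝ)+2) * mlc p u v n = mlw p u v n / mlE u v p := by
  have h1 := (gammaE_pos hp hu hv n).ne'
  have h2 := (mlE_pos hp hu hv).ne'
  have h3 : ((n:ℝ)+2) ≠ 0 := by positivity
  unfold mlc mlw
  field_simp

lemma summable_c1 : Summable (fun n : ℕ => ((n:ℝ)+2) * mlc p u v n) :=
  ((summable_mlw hp hu hv).div_const (mlE u v p)).congr fun n => (mlc_eq hp hu hv n).symm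

lemma mlc_eq2 (n : ℕ) :
    ((n:ℝ)+2) * ((n:ℝ)+1) * mlc p u v n = (((n:ℝ)+1) * mlw p u v n) / mlE u v p := by
  rw [show ((n:ℝ)+2) * ((n:ℝ)+1) * mlc p u v n = ((n:ℝ)+1) * (((n:ℝ)+2) * mlc p u v n) by ring,
    mlc_eq hp hu hv n]
  ring

lemma summable_c2 : Summable (fun n : ℕ => ((n:ℝ)+2) * ((n:ℝ)+1) * mlc p u v n) :=
  ((summable_mul_mlw hp hu hv).div_const (mlE u v p)).congr fun n => (mlc_eq2 hp hu hv n).symm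

lemma hasDerivAt_mlH {z : ℂ} (hz : z ∈ ball (0:ℂ) 1) :
    HasDerivAt (mlH p u v) (1 + mlG1 p u v z) z := by
  have hz1 : ‖z‖ < 1 := by simpa using mem_ball_zero_iff.1 hz
  set r : ℝ := (1 + ‖z‖) / 2 with hr
  have hr0 : 0 < r := by positivity
  have hr1 : r < 1 := by rw [hr]; linarith
  have hzr : ‖z‖ < r := by rw [hr]; linarith
  have husum : Summable (fun n : ℕ => (((n:ℝ)+2) * mlc p u v n) * r^(n+1)) := by
    have h1 : ∀ n : ℕ, 0 ≤ (((n:ℝ)+2) * mlc p u v n) * r^(n+1) := by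
      intro n
      have := mlc_nonneg hp hu hv n
      positivity
    have h2 : ∀ n : ℕ, (((n:ℝ)+2) * mlc p u v n) * r^(n+1) ≤ ((n:ℝ)+2) * mlc p u v n := by
      intro n
      have hc := mlc_nonneg hp hu hv n
      have : r^(n+1) ≤ 1 := pow_le_one₀ hr0.le hr1.le
      nlinarith [mul_nonneg (by positivity : (0:ℝ) ≤ (n:ℝ)+2) hc]
    exact Summable.of_nonneg_of_le h1 h2 (summable_c1 hp hu hv)
  have HT := hasDerivAt_tsum_of_isPreconnected
    (u := fun n : ℕ => (((n:ℝ)+2) * mlc p u v n) * r^(n+1))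
    (g := fun (n : ℕ) (y : ℂ) => ((mlc p u v n : ℝ) : ℂ) * y^(n+2))
    (g' := fun (n : ℕ) (y : ℂ) => ((((n:ℝ)+2) * mlc p u v n : ℝ) : ℂ) * y^(n+1))
    husum isOpen_ball (convex_ball (0:ℂ) r).isPreconnected
    ?_ ?_ (mem_ball_self hr0) ?_ (mem_ball_zero_iff.2 hzr)
  · have := (hasDerivAt_id z).add HT
    rw [mlH_eq]
    exact this
  · intro n y _
    have h := (hasDerivAt_pow (n+2) y).const_mul ((mlc p u v n : ℝ) : ℂ)
    refine h.congr_deriv ?_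
    push_cast
    ring_nf
  · intro n y hy
    have hyr : ‖y‖ ≤ r := (mem_ball_zero_iff.1 hy).le
    rw [norm_mul, norm_pow, Complex.norm_real, Real.norm_eq_abs,
      abs_of_nonneg (by have := mlc_nonneg hp hu hv n; positivity)]
    have hc := mlc_nonneg hp hu hv n
    exact mul_le_mul_of_nonneg_left (pow_le_pow_left₀ (norm_nonneg y) hyr _) (by positivity)
  · apply Summable.congr summable_zero
    intro n
    simp

lemma hasDerivAt_mlG1 {z : ℂ} (hz : z ∈ ball (0:ℂ) 1) :
    HasDerivAt (mlG1 p u v) (mlG2 p u v z) z := by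
  have hz1 : ‖z‖ < 1 := by simpa using mem_ball_zero_iff.1 hz
  set r : ℝ := (1 + ‖z‖) / 2 with hr
  have hr0 : 0 < r := by positivity
  have hr1 : r < 1 := by rw [hr]; linarith
  have hzr : ‖z‖ < r := by rw [hr]; linarith
  have husum : Summable (fun n : ℕ => (((n:ℝ)+2) * ((n:ℝ)+1) * mlc p u v n) * r^n) := by
    have h1 : ∀ n : ℕ, 0 ≤ (((n:ℝ)+2) * ((n:ℝ)+1) * mlc p u v n) * r^n := by
      intro n
      have := mlc_nonneg hp hu hv n
      positivity
    have h2 : ∀ n : ℕ, (((n:ℝ)+2) * ((n:ℝ)+1) * mlc p u v n) * r^n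
        ≤ ((n:ℝ)+2) * ((n:ℝ)+1) * mlc p u v n := by
      intro n
      have hc := mlc_nonneg hp hu hv n
      have h3 : r^n ≤ 1 := pow_le_one₀ hr0.le hr1.le
      nlinarith [mul_nonneg (mul_nonneg (by positivity : (0:ℝ) ≤ (n:ℝ)+2)
        (by positivity : (0:ℝ) ≤ (n:ℝ)+1)) hc]
    exact Summable.of_nonneg_of_le h1 h2 (summable_c2 hp hu hv)
  have HT := hasDerivAt_tsum_of_isPreconnected
    (u := fun n : ℕ => (((n:ℝ)+2) * ((n:ℝ)+1) * mlc p u v n) * r^n)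
    (g := fun (n : ℕ) (y : ℂ) => ((((n:ℝ)+2) * mlc p u v n : ℝ) : ℂ) * y^(n+1))
    (g' := fun (n : ℕ) (y : ℂ) => ((((n:ℝ)+2) * ((n:ℝ)+1) * mlc p u v n : ℝ) : ℂ) * y^n)
    husum isOpen_ball (convex_ball (0:ℂ) r).isPreconnected
    ?_ ?_ (mem_ball_self hr0) ?_ (mem_ball_zero_iff.2 hzr)
  · exact HT
  · intro n y _
    have h := (hasDerivAt_pow (n+1) y).const_mul ((((n:ℝ)+2) * mlc p u v n : ℝ) : ℂ)
    refine h.congr_deriv ?_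
    push_cast
    ring_nf
  · intro n y hy
    have hyr : ‖y‖ ≤ r := (mem_ball_zero_iff.1 hy).le
    rw [norm_mul, norm_pow, Complex.norm_real, Real.norm_eq_abs,
      abs_of_nonneg (by have := mlc_nonneg hp hu hv n; positivity)]
    have hc := mlc_nonneg hp hu hv n
    exact mul_le_mul_of_nonneg_left (pow_le_pow_left₀ (norm_nonneg y) hyr _) (by positivity)
  · apply Summable.congr summable_zero
    intro n
    simp

end cx

section fin
variable {p u v : ℝ} (hp : 1 ≤ p) (hu : 1 ≤ u) (hv : 1 < v)
  {η : ℝ} (hη0 : 0 ≤ η) (hη1 : η ≤ 1)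
include hp hu hv hη0 hη1

lemma W_norm_le {z : ℂ} (hz1 : ‖z‖ < 1) :
    ‖mlG1 p u v z + (η:ℂ) * z * mlG2 p u v z‖
      ≤ ‖z‖ * ((∑' n : ℕ, (1+η*((n:ℝ)+1)) * mlw p u v n) / mlE u v p) := by
  have hz1' : ‖z‖ ≤ 1 := hz1.le
  have hnn : ∀ n : ℕ, 0 ≤ ((n:ℝ)+2) * mlc p u v n := by
    intro n
    have := mlc_nonneg hp hu hv n
    positivity
  have hnn2 : ∀ n : ℕ, 0 ≤ ((n:ℝ)+2) * ((n:ℝ)+1) * mlc p u v n := by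
    intro n
    have := mlc_nonneg hp hu hv n
    positivity
  have hnorm1 : ∀ n : ℕ, ‖((((n:ℝ)+2) * mlc p u v n : ℝ):ℂ) * z^(n+1)‖
      = (((n:ℝ)+2) * mlc p u v n) * ‖z‖^(n+1) := by
    intro n
    rw [norm_mul, norm_pow, Complex.norm_real, Real.norm_eq_abs, abs_of_nonneg (hnn n)]
  have hA : Summable (fun n : ℕ => ((((n:ℝ)+2) * mlc p u v n : ℝ):ℂ) * z^(n+1)) := by
    apply Summable.of_norm
    refine Summable.of_nonneg_of_le (fun n => norm_nonneg _) (fun n => ?_) (summable_c1 hp hu hv)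
    rw [hnorm1 n]
    have : ‖z‖^(n+1) ≤ 1 := pow_le_one₀ (norm_nonneg z) hz1'
    nlinarith [hnn n]
  have hB : Summable (fun n : ℕ => ((η*(((n:ℝ)+2)*((n:ℝ)+1)*mlc p u v n) : ℝ):ℂ) * z^(n+1)) := by
    apply Summable.of_norm
    refine Summable.of_nonneg_of_le (fun n => norm_nonneg _) (fun n => ?_)
      ((summable_c2 hp hu hv).mul_left η)
    rw [norm_mul, norm_pow, Complex.norm_real, Real.norm_eq_abs,
      abs_of_nonneg (mul_nonneg hη0 (hnn2 n))]
    have h3 : ‖z‖^(n+1) ≤ 1 := pow_le_one₀ (norm_nonneg z) hz1'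
    nlinarith [mul_nonneg hη0 (hnn2 n)]
  have e2 : (η:ℂ) * z * mlG2 p u v z
      = ∑' n : ℕ, ((η*(((n:ℝ)+2)*((n:ℝ)+1)*mlc p u v n) : ℝ):ℂ) * z^(n+1) := by
    unfold mlG2
    rw [← tsum_mul_left]
    apply tsum_congr
    intro n
    push_cast
    ring
  have e3 : mlG1 p u v z + (η:ℂ) * z * mlG2 p u v z
      = ∑' n : ℕ, (((1+η*((n:ℝ)+1)) * (((n:ℝ)+2) * mlc p u v n) : ℝ):ℂ) * z^(n+1) := by
    rw [e2]
    unfold mlG1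
    rw [← Summable.tsum_add hA hB]
    apply tsum_congr
    intro n
    push_cast
    ring
  rw [e3]
  have hKnn : ∀ n : ℕ, 0 ≤ (1+η*((n:ℝ)+1)) * (((n:ℝ)+2) * mlc p u v n) := by
    intro n
    have hn : (0:ℝ) ≤ n := n.cast_nonneg
    exact mul_nonneg (by nlinarith) (hnn n)
  have hbound : ∀ n : ℕ, ‖(((1+η*((n:ℝ)+1)) * (((n:ℝ)+2) * mlc p u v n) : ℝ):ℂ) * z^(n+1)‖
      ≤ ((1+η*((n:ℝ)+1)) * mlw p u v n / mlE u v p) * ‖z‖ := by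
    intro n
    rw [norm_mul, norm_pow, Complex.norm_real, Real.norm_eq_abs, abs_of_nonneg (hKnn n)]
    have hz2 : ‖z‖^(n+1) ≤ ‖z‖ := by
      have := pow_le_pow_of_le_one (norm_nonneg z) hz1' (show 1 ≤ n+1 by omega)
      simpa using this
    calc (1+η*((n:ℝ)+1)) * (((n:ℝ)+2) * mlc p u v n) * ‖z‖^(n+1)
        ≤ (1+η*((n:ℝ)+1)) * (((n:ℝ)+2) * mlc p u v n) * ‖z‖ :=
          mul_le_mul_of_nonneg_left hz2 (hKnn n)
      _ = ((1+η*((n:ℝ)+1)) * mlw p u v n / mlE u v p) * ‖z‖ := by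
          rw [mlc_eq hp hu hv n]
          ring
  have hRs : Summable (fun n : ℕ => ((1+η*((n:ℝ)+1)) * mlw p u v n / mlE u v p) * ‖z‖) :=
    (((summable_B hp hu hv hη0 hη1).div_const (mlE u v p)).mul_right ‖z‖)
  have hsn : Summable (fun n : ℕ =>
      ‖(((1+η*((n:ℝ)+1)) * (((n:ℝ)+2) * mlc p u v n) : ℝ):ℂ) * z^(n+1)‖) :=
    Summable.of_nonneg_of_le (fun n => norm_nonneg _) hbound hRs
  calc ‖∑' n : ℕ, (((1+η*((n:ℝ)+1)) * (((n:ℝ)+2) * mlc p u v n) : ℝ):ℂ) * z^(n+1)‖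
      ≤ ∑' n : ℕ, ‖(((1+η*((n:ℝ)+1)) * (((n:ℝ)+2) * mlc p u v n) : ℝ):ℂ) * z^(n+1)‖ :=
        norm_tsum_le_tsum_norm hsn
    _ ≤ ∑' n : ℕ, ((1+η*((n:ℝ)+1)) * mlw p u v n / mlE u v p) * ‖z‖ :=
        Summable.tsum_le_tsum hbound hsn hRs
    _ = ‖z‖ * ((∑' n : ℕ, (1+η*((n:ℝ)+1)) * mlw p u v n) / mlE u v p) := by
        rw [tsum_mul_right, tsum_div_const]
        ring

end fin

/-- **Theorem 3.2**: a sufficient condition for `ℋ(p,u,v) ∈ ℛ(η,δ)`. -/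
theorem stmt_9 (p u v : ℝ) (hp : 1 ≤ p) (hu : 1 ≤ u) (hv : 1 < v)
    (δ : ℂ) (hδ : δ ≠ 0) (η : ℝ) (hη0 : 0 ≤ η) (hη1 : η ≤ 1)
    (hcond : 1 / (u * mlE u v p) *
        (((1 - v) * η + u) * (mlE u v p - 1 / Real.Gamma v) +
          η * (mlE u (v - 1) p - 1 / Real.Gamma (v - 1)))
        ≤ ‖δ‖) :
    ∀ z ∈ ball (0 : ℂ) 1,
      0 < (1 + (1 / δ) *
        (deriv (mlH p u v) z + (η : ℂ) * z * deriv (deriv (mlH p u v)) z - 1)).re := by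
  intro z hz
  have hz1 : ‖z‖ < 1 := by simpa using mem_ball_zero_iff.1 hz
  have hd1 : deriv (mlH p u v) z = 1 + mlG1 p u v z := (hasDerivAt_mlH hp hu hv hz).deriv
  have hev : deriv (mlH p u v) =ᶠ[nhds z] (fun y => 1 + mlG1 p u v y) := by
    filter_upwards [isOpen_ball.mem_nhds hz] with y hy
    exact (hasDerivAt_mlH hp hu hv hy).deriv
  have hd2 : deriv (deriv (mlH p u v)) z = mlG2 p u v z := by
    rw [hev.deriv_eq]
    exact (HasDerivAt.const_add 1 (hasDerivAt_mlG1 hp hu hv hz)).deriv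
  rw [hd1, hd2]
  have he : 1 + 1/δ * ((1 + mlG1 p u v z) + (η:ℂ)*z*mlG2 p u v z - 1)
      = 1 + 1/δ * (mlG1 p u v z + (η:ℂ)*z*mlG2 p u v z) := by ring
  rw [he]
  set W := mlG1 p u v z + (η:ℂ)*z*mlG2 p u v z with hWdef
  have hWle := W_norm_le hp hu hv hη0 hη1 hz1
  have hBle := B_div_le hp hu hv hη0 hη1 hcond
  have hδ0 : 0 < ‖δ‖ := norm_pos_iff.2 hδ
  have hBnn : 0 ≤ (∑' n : ℕ, (1+η*((n:ℝ)+1)) * mlw p u v n) / mlE u v p := by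
    apply div_nonneg _ (mlE_pos hp hu hv).le
    apply tsum_nonneg
    intro n
    have hn : (0:ℝ) ≤ n := n.cast_nonneg
    exact mul_nonneg (by nlinarith) (mlw_nonneg hp hu hv n)
  have hWlt : ‖W‖ < ‖δ‖ := by
    have h1 : ‖W‖ ≤ ‖z‖ * ‖δ‖ := by
      refine hWle.trans ?_
      exact mul_le_mul_of_nonneg_left hBle (norm_nonneg z)
    nlinarith [norm_nonneg z]
  have h2 : ‖1/δ * W‖ < 1 := by
    rw [norm_mul, norm_div, norm_one, div_mul_eq_mul_div, one_mul]
    rw [div_lt_one hδ0]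
    exact hWlt
  have h3 := Complex.abs_re_le_norm (1/δ * W)
  have h4 := (abs_le.1 h3).1
  have h5 : (1 + 1/δ * W).re = 1 + (1/δ * W).re := by simp [Complex.add_re]
  rw [h5]
  linarith
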